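/- arXiv:2002.04466 — 7 statements merged into one kernel-verified Lean document; each statement's English description precedes it below -/
import Mathlib

section
/- Let R be a commutative k-algebra and λ ∈ k. Define on the set R^ℕ of sequences the λ-Hurwitz product (fg)_n = Σ_{k=0}^{n} Σ_{j=0}^{n-k} C(n,k) C(n-k,j) λ^k f_{n-j} g_{k+j}. Then R^ℕ with pointwise addition and this product is a commutative k-algebra with identity the sequence (1,0,0,...). -/
open Finset

/-- The λ-Hurwitz product on sequences. -/
def hmul {K R : Type*} [CommRing K] [CommRing R] [Algebra K R] (lam : K) (f g : ℕ → R) :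
    ℕ → R :=
  fun n => ∑ i ∈ range (n + 1), ∑ j ∈ range (n - i + 1),
    (n.choose i * (n - i).choose j) • (lam ^ i • (f (n - j) * g (i + j)))

/-- The sequence (1,0,0,...). -/
def hone {R : Type*} [CommRing R] : ℕ → R := fun n => if n = 0 then 1 else 0

/-!
Write `f ⊗ g` for the array `(p, q) ↦ f p * g q` and `S₁`, `S₂` for the shifts of its two indices.
The binomial theorem, applied to the commuting operators `λ S₁ S₂` and `S₁ + S₂`, gives
`(f g)ₙ = ((S₁ + S₂ + λ S₁ S₂)ⁿ (f ⊗ g)) (0, 0)`. Since `S₁ (f ⊗ g) = ∂f ⊗ g` and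
`S₂ (f ⊗ g) = f ⊗ ∂g` for the shift `∂` of sequences, the product satisfies the λ-Leibniz rule
`∂(f g) = ∂f g + f ∂g + λ ∂f ∂g`, and `(f g)₀ = f₀ g₀`. A sequence is determined by its value at `0`
and its shift, so commutativity, associativity and the unit law follow by induction on the index,
simultaneously for all sequences.
-/

namespace Hurwitz

variable {K R : Type*} [CommRing K] [CommRing R] [Algebra K R]

def shift (f : ℕ → R) : ℕ → R := fun n => f (n + 1)

def outer (f g : ℕ → R) : ℕ × ℕ → R := fun p => f p.1 * g p.2

variable (K R) in
def shiftFst : Module.End K (ℕ × ℕ → R) := LinearMap.funLeft K R (Prod.map Nat.succ id)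

variable (K R) in
def shiftSnd : Module.End K (ℕ × ℕ → R) := LinearMap.funLeft K R (Prod.map id Nat.succ)

variable (R) in
def leibnizOp (lam : K) : Module.End K (ℕ × ℕ → R) :=
  shiftFst K R + shiftSnd K R + lam • (shiftFst K R * shiftSnd K R)

lemma pow_shiftFst_apply (a : ℕ) (T : ℕ × ℕ → R) (p : ℕ × ℕ) :
    (shiftFst K R ^ a) T p = T (p.1 + a, p.2) := by
  induction a generalizing T with
  | zero => rfl
  | succ a ih => rw [pow_succ, Module.End.mul_apply, ih]; rfl

lemma pow_shiftSnd_apply (b : ℕ) (T : ℕ × ℕ → R) (p : ℕ × ℕ) :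
    (shiftSnd K R ^ b) T p = T (p.1, p.2 + b) := by
  induction b generalizing T with
  | zero => rfl
  | succ b ih => rw [pow_succ, Module.End.mul_apply, ih]; rfl

lemma commute_shiftFst_shiftSnd : Commute (shiftFst K R) (shiftSnd K R) := by
  ext T p; rfl

lemma leibnizOp_outer (lam : K) (f g : ℕ → R) :
    leibnizOp R lam (outer f g) =
      outer (shift f) g + outer f (shift g) + lam • outer (shift f) (shift g) := rfl

lemma hmul_apply_eq_leibnizOp_pow (lam : K) (f g : ℕ → R) (n : ℕ) :
    hmul lam f g n = (leibnizOp R lam ^ n) (outer f g) (0, 0) := by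
  have hc : Commute (lam • (shiftFst K R * shiftSnd K R)) (shiftSnd K R + shiftFst K R) :=
    ((commute_shiftFst_shiftSnd.mul_left (Commute.refl _)).add_right
      ((Commute.refl _).mul_left commute_shiftFst_shiftSnd.symm)).smul_left lam
  -- `(λ S₁ S₂ + (S₂ + S₁))ⁿ = ∑ᵢ ∑ⱼ C(n,i) C(n-i,j) λⁱ S₁ⁱ S₂ⁱ S₂ʲ S₁ⁿ⁻ⁱ⁻ʲ`
  rw [leibnizOp, add_comm (shiftFst K R), add_comm, hc.add_pow]
  simp only [commute_shiftFst_shiftSnd.symm.add_pow, hmul, mul_sum, sum_mul, LinearMap.sum_apply,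
    Finset.sum_apply, Module.End.mul_apply, Module.End.natCast_apply, smul_pow,
    commute_shiftFst_shiftSnd.mul_pow, LinearMap.smul_apply, Pi.smul_apply, pow_shiftFst_apply,
    pow_shiftSnd_apply]
  refine sum_congr rfl fun i hi => sum_congr rfl fun j hj => ?_
  have hij : i + j ≤ n := by simp only [mem_range] at hi hj; omega
  rw [outer, show 0 + i + (n - i - j) = n - j by omega, zero_add, mul_smul, smul_comm (lam ^ i),
    smul_comm (lam ^ i), smul_comm (n.choose i)]

lemma hmul_apply_zero (lam : K) (f g : ℕ → R) : hmul lam f g 0 = f 0 * g 0 := by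
  simp [hmul]

lemma hmul_apply_succ (lam : K) (f g : ℕ → R) (n : ℕ) :
    hmul lam f g (n + 1) =
      hmul lam (shift f) g n + hmul lam f (shift g) n + lam • hmul lam (shift f) (shift g) n := by
  simp only [hmul_apply_eq_leibnizOp_pow, pow_succ, Module.End.mul_apply, leibnizOp_outer,
    map_add, map_smul]
  rfl

lemma shift_hmul (lam : K) (f g : ℕ → R) :
    shift (hmul lam f g) =
      hmul lam (shift f) g + hmul lam f (shift g) + lam • hmul lam (shift f) (shift g) :=
  funext (hmul_apply_succ lam f g)

lemma hmul_add (lam : K) (f g h : ℕ → R) :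
    hmul lam f (g + h) = hmul lam f g + hmul lam f h := by
  funext n
  simp only [hmul, Pi.add_apply, mul_add, smul_add, sum_add_distrib]

lemma add_hmul (lam : K) (f g h : ℕ → R) :
    hmul lam (f + g) h = hmul lam f h + hmul lam g h := by
  funext n
  simp only [hmul, Pi.add_apply, add_mul, smul_add, sum_add_distrib]

lemma smul_hmul (lam c : K) (f g : ℕ → R) : hmul lam (c • f) g = c • hmul lam f g := by
  funext n
  simp only [hmul, Pi.smul_apply, smul_mul_assoc, smul_sum, smul_comm c]

lemma hmul_smul (lam c : K) (f g : ℕ → R) : hmul lam f (c • g) = c • hmul lam f g := by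
  funext n
  simp only [hmul, Pi.smul_apply, mul_smul_comm, smul_sum, smul_comm c]

lemma hmul_comm (lam : K) (f g : ℕ → R) : hmul lam f g = hmul lam g f := by
  funext n
  induction n generalizing f g with
  | zero => rw [hmul_apply_zero, hmul_apply_zero, mul_comm]
  | succ n ih =>
    rw [hmul_apply_succ, hmul_apply_succ, ih (shift f), ih f, ih (shift f),
      add_comm (hmul lam g (shift f) n)]

lemma zero_hmul (lam : K) (g : ℕ → R) : hmul lam 0 g = 0 := by
  simpa using smul_hmul lam 0 0 g

lemma shift_hone : shift (hone : ℕ → R) = 0 := rfl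

lemma hone_hmul (lam : K) (f : ℕ → R) : hmul lam hone f = f := by
  funext n
  induction n generalizing f with
  | zero => simp [hmul_apply_zero, hone]
  | succ n ih => simp [hmul_apply_succ, shift_hone, zero_hmul, ih, shift]

lemma hmul_assoc (lam : K) (f g h : ℕ → R) :
    hmul lam (hmul lam f g) h = hmul lam f (hmul lam g h) := by
  funext n
  induction n generalizing f g h with
  | zero => simp only [hmul_apply_zero, mul_assoc]
  | succ n ih =>
    simp only [hmul_apply_succ, shift_hmul, add_hmul, hmul_add, smul_hmul, hmul_smul,
      Pi.add_apply, Pi.smul_apply, ih]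
    module

end Hurwitz

open Hurwitz

/-- R^ℕ with pointwise addition and the λ-Hurwitz product is a commutative
K-algebra with identity (1,0,0,...). -/
theorem stmt0 {K R : Type*} [CommRing K] [CommRing R] [Algebra K R] (lam : K) :
    (∀ f g : ℕ → R, hmul lam f g = hmul lam g f) ∧
    (∀ f g h : ℕ → R, hmul lam (hmul lam f g) h = hmul lam f (hmul lam g h)) ∧
    (∀ f g h : ℕ → R, hmul lam f (g + h) = hmul lam f g + hmul lam f h) ∧
    (∀ f g h : ℕ → R, hmul lam (f + g) h = hmul lam f h + hmul lam g h) ∧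
    (∀ f : ℕ → R, hmul lam hone f = f) ∧
    (∀ f : ℕ → R, hmul lam f hone = f) ∧
    (∀ (c : K) (f g : ℕ → R), hmul lam (c • f) g = c • hmul lam f g) ∧
    (∀ (c : K) (f g : ℕ → R), hmul lam f (c • g) = c • hmul lam f g) := by
  refine ⟨hmul_comm lam, hmul_assoc lam, hmul_add lam, add_hmul lam, hone_hmul lam, fun f => ?_,
    smul_hmul lam, hmul_smul lam⟩
  rw [hmul_comm, hone_hmul]
end

section
/- Let R be a commutative k-algebra and λ ∈ k. Define ∂ : R^ℕ → R^ℕ by ∂(f)_n = f_{n+1}. Then ∂ is a differential operator of weight λ on the algebra R^ℕ of λ-Hurwitz series, i.e., ∂ is k-linear, ∂(fg) = ∂(f)g + f∂(g) + λ∂(f)∂(g) for all f,g ∈ R^ℕ, and ∂(1) = 0. -/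
/-!
Writing `k = n - m` for the index of `f`, the `λ`-Hurwitz product reads
`(f g)_n = ∑_{m + k = n} C(n, m) g_m ((1 + λ∂)^m f)_k`. Shifting `n` to `n + 1` and splitting
`C(n + 1, m)` by Pascal's rule gives two sums: in the one where `m` moves up,
`(1 + λ∂)^(m+1) = (1 + λ∂)^m + λ∂ (1 + λ∂)^m` produces `f ∂g + λ ∂f ∂g`; in the one where `k`
moves up, the shift lands on `f` and produces `∂f g`.
-/

open Finset

/-- The shift operator ∂(f)_n = f_{n+1}. -/
def der {R : Type*} (f : ℕ → R) : ℕ → R := fun n => f (n + 1)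

section ShiftBinom

variable {K M : Type*} [Semiring K] [AddCommMonoid M] [Module K M]

/-- `shiftBinom lam f k m` is the `k`-th term of `(1 + lam • der) ^ m f`. -/
def shiftBinom (lam : K) (f : ℕ → M) (k m : ℕ) : M :=
  ∑ i ∈ range (m + 1), m.choose i • lam ^ i • f (k + i)

theorem shiftBinom_der (lam : K) (f : ℕ → M) (k m : ℕ) :
    shiftBinom lam (der f) k m = shiftBinom lam f (k + 1) m := by
  simp only [shiftBinom, der, add_right_comm]

theorem shiftBinom_succ (lam : K) (f : ℕ → M) (k m : ℕ) :
    shiftBinom lam f k (m + 1) = shiftBinom lam f k m + lam • shiftBinom lam f (k + 1) m := by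
  rw [shiftBinom, sum_choose_succ_nsmul (fun i _ => lam ^ i • f (k + i)) m, shiftBinom,
    shiftBinom, smul_sum]
  congr 1
  refine sum_congr rfl fun i _ => ?_
  rw [smul_comm lam, pow_succ', mul_smul, add_right_comm, add_assoc]

end ShiftBinom

section HurwitzProduct

variable {K R : Type*} [CommRing K] [CommRing R] [Algebra K R]

theorem hmul_apply_eq_sum_antidiagonal (lam : K) (f g : ℕ → R) (n : ℕ) :
    hmul lam f g n =
      ∑ p ∈ antidiagonal n, n.choose p.1 • (g p.1 * shiftBinom lam f p.2 p.1) := by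
  rw [hmul,
    Nat.sum_antidiagonal_eq_sum_range_succ (fun m k => n.choose m • (g m * shiftBinom lam f k m))]
  have hrange : ∀ i ∈ range (n + 1), range (n - i + 1) = range (n + 1 - i) := fun i hi => by
    rw [Nat.sub_add_comm (mem_range_succ_iff.1 hi)]
  rw [sum_congr rfl fun i hi => by rw [hrange i hi], ← sum_range_diag_flip]
  refine sum_congr rfl fun m hm => ?_
  rw [shiftBinom, mul_sum, smul_sum]
  refine sum_congr rfl fun i hi => ?_
  have him := mem_range_succ_iff.1 hi
  have hmn := mem_range_succ_iff.1 hm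
  rw [Nat.add_sub_cancel' him, show n - (m - i) = n - m + i by omega, ← Nat.choose_mul him,
    mul_smul, mul_smul_comm, mul_smul_comm, mul_comm]

theorem der_hmul (lam : K) (f g : ℕ → R) :
    der (hmul lam f g) =
      hmul lam (der f) g + hmul lam f (der g) + lam • hmul lam (der f) (der g) := by
  funext n
  simp only [der, Pi.add_apply, Pi.smul_apply, hmul_apply_eq_sum_antidiagonal,
    sum_antidiagonal_choose_succ_nsmul (fun m k => g m * shiftBinom lam f k m), shiftBinom_der,
    shiftBinom_succ]
  rw [smul_sum, ← sum_add_distrib, ← sum_add_distrib, ← sum_add_distrib]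
  refine sum_congr rfl fun p hp => ?_
  rw [Nat.choose_symm_of_eq_add (mem_antidiagonal.1 hp).symm, mul_add, smul_add,
    mul_smul_comm, smul_comm (n.choose p.2) lam, add_assoc]

theorem der_hone : der (hone (R := R)) = 0 := by
  funext n
  simp [der, hone]

end HurwitzProduct

/-- ∂ is a differential operator of weight λ on the algebra of λ-Hurwitz series:
it is K-linear, satisfies the λ-Leibniz rule, and kills the identity. -/
theorem stmt1 {K R : Type*} [CommRing K] [CommRing R] [Algebra K R] (lam : K) :
    (∀ f g : ℕ → R, der (f + g) = der f + der g) ∧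
    (∀ (c : K) (f : ℕ → R), der (c • f) = c • der f) ∧
    (∀ f g : ℕ → R,
      der (hmul lam f g)
        = hmul lam (der f) g + hmul lam f (der g) + lam • hmul lam (der f) (der g)) ∧
    der (hone (R := R)) = 0 :=
  ⟨fun _ _ => rfl, fun _ _ => rfl, der_hmul lam, der_hone⟩
end

section
/- Let A be the free k-module with basis {z_i : i ∈ ℕ} and multiplication determined by z_m z_n = Σ_{j=0}^{m} C(m+n-j, n) C(n, j) λ^j z_{m+n-j}, extended bilinearly. Then A is a commutative k-algebra with identity z_0, and the operator P defined by P(z_i) = z_{i+1} is a Rota-Baxter operator of weight λ on A, i.e., P(u)P(v) = P(P(u)v) + P(uP(v)) + λP(uv) for all u, v ∈ A. -/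
/-!
Counting pairs of an `m`-subset and an `n`-subset of an `x`-set by the size `m + n - j` of their
union gives `C(x,m) C(x,n) = ∑ⱼ C(m+n-j,n) C(n,j) C(x,m+n-j)`: the structure constants are those
of the binomial functions `x ↦ C(x,k)` (for `λ = 1`, `z_k ↦ C(·,k)` embeds `A` into the functions
on `ℕ`, `P` becoming the summation operator). As these functions are linearly independent, the
coefficient of `λ^l z_{m+n+p-l}` in `(z_m z_n) z_p` is determined by `C(x,m) C(x,n) C(x,p)`, hence
invariant under rotating `(m, n, p)`; with commutativity this is associativity. Commutativity is
the symmetry of the multinomial coefficient `C(m+n-j,n) C(n,j)`, and the Rota–Baxter identity on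
basis elements is Pascal's rule applied to both binomial factors.
-/

open Finset

/-- The multiplication on the free K-module with basis {z_i : i ∈ ℕ} determined by
z_m z_n = Σ_{j=0}^{m} C(m+n-j, n) C(n, j) λ^j z_{m+n-j}, extended bilinearly. -/
noncomputable def zmul {K : Type*} [CommRing K] (lam : K) (u v : ℕ →₀ K) : ℕ →₀ K :=
  u.sum fun m a => v.sum fun n b =>
    ∑ j ∈ range (m + 1),
      ((m + n - j).choose n * n.choose j) • Finsupp.single (m + n - j) (a * b * lam ^ j)

/-- The shift operator P(z_i) = z_{i+1}. -/
noncomputable def shiftP {K : Type*} [CommRing K] (u : ℕ →₀ K) : ℕ →₀ K :=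
  Finsupp.mapDomain (· + 1) u

def zmulCoeff (m n j : ℕ) : ℕ := (m + n - j).choose n * n.choose j

lemma zmulCoeff_eq_zero_of_lt {m j : ℕ} (n : ℕ) (h : m < j) : zmulCoeff m n j = 0 := by
  rcases le_or_gt j n with hjn | hjn
  · rw [zmulCoeff, Nat.choose_eq_zero_of_lt (by omega), zero_mul]
  · rw [zmulCoeff, Nat.choose_eq_zero_of_lt hjn, mul_zero]

lemma zmulCoeff_comm (m n j : ℕ) : zmulCoeff m n j = zmulCoeff n m j := by
  rcases lt_or_ge m j with hm | hm
  · rw [zmulCoeff_eq_zero_of_lt n hm, zmulCoeff, Nat.choose_eq_zero_of_lt hm, mul_zero]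
  rcases lt_or_ge n j with hn | hn
  · rw [zmulCoeff_eq_zero_of_lt m hn, zmulCoeff, Nat.choose_eq_zero_of_lt hn, mul_zero]
  rw [zmulCoeff, zmulCoeff, Nat.choose_mul hn, Nat.choose_mul hm, Nat.add_comm n m]
  congr 1
  exact Nat.choose_symm_of_eq_add (by omega)

lemma sum_range_zmulCoeff_smul_of_le {M : Type*} [AddCommMonoid M] {m N : ℕ} (n : ℕ) (h : m ≤ N)
    (f : ℕ → M) :
    ∑ j ∈ range (m + 1), zmulCoeff m n j • f j = ∑ j ∈ range (N + 1), zmulCoeff m n j • f j :=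
  sum_subset (range_subset_range.2 (by omega)) fun j _ hj => by
    rw [zmulCoeff_eq_zero_of_lt n (by simpa using hj), zero_smul]

lemma choose_mul_choose_eq_sum_zmulCoeff (x m n : ℕ) :
    x.choose m * x.choose n
      = ∑ j ∈ range (m + n + 1), zmulCoeff m n j * x.choose (m + n - j) := by
  have vandermonde : x.choose n * x.choose m
      = x.choose n * ∑ j ∈ range (m + 1), n.choose j * (x - n).choose (m - j) := by
    rcases lt_or_ge x n with hx | hx
    · rw [Nat.choose_eq_zero_of_lt hx, zero_mul, zero_mul]
    · obtain ⟨y, rfl⟩ := Nat.exists_eq_add_of_le hx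
      rw [Nat.add_sub_cancel_left, Nat.add_choose_eq n y m,
        Nat.sum_antidiagonal_eq_sum_range_succ_mk]
  simp only [← smul_eq_mul (a := zmulCoeff m n _)]
  rw [← sum_range_zmulCoeff_smul_of_le n (Nat.le_add_right m n), mul_comm, vandermonde, mul_sum]
  refine sum_congr rfl fun j hj => ?_
  have hj : j ≤ m := by simpa [Nat.lt_succ_iff] using hj
  have absorb := Nat.choose_mul (n := x) (show n ≤ m + n - j by omega)
  rw [show m + n - j - n = m - j by omega] at absorb
  rw [smul_eq_mul, zmulCoeff, mul_right_comm, mul_comm _ (x.choose _), absorb]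
  ring

lemma eq_of_forall_sum_mul_choose_eq {N : ℕ} {f g : ℕ → ℕ}
    (h : ∀ x : ℕ,
      ∑ k ∈ range (N + 1), f k * x.choose k = ∑ k ∈ range (N + 1), g k * x.choose k) :
    ∀ k ≤ N, f k = g k := by
  intro k
  induction k using Nat.strong_induction_on with
  | _ k ih =>
    intro hk
    have truncate (φ : ℕ → ℕ) :
        ∑ i ∈ range (N + 1), φ i * k.choose i = ∑ i ∈ range k, φ i * k.choose i + φ k := by
      rw [← sum_subset (range_subset_range.2 (show k + 1 ≤ N + 1 by omega)), sum_range_succ,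
        Nat.choose_self, mul_one]
      intro i _ hi
      rw [Nat.choose_eq_zero_of_lt (by simpa using hi), mul_zero]
    have lower : ∑ i ∈ range k, f i * k.choose i = ∑ i ∈ range k, g i * k.choose i :=
      sum_congr rfl fun i hi => by
        rw [ih i (mem_range.mp hi) (by rw [mem_range] at hi; omega)]
    have := h k
    rw [truncate, truncate, lower] at this
    omega

/-- The coefficient of `λ^l z_{a+b+c-l}` in `(z_a z_b) z_c`. -/
def tripleCoeff (a b c l : ℕ) : ℕ :=
  ∑ j ∈ range (l + 1), zmulCoeff a b j * zmulCoeff (a + b - j) c (l - j)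

lemma sum_zmulCoeff_smul_sum_zmulCoeff_smul {V : Type*} [AddCommMonoid V] (a b c : ℕ)
    (g : ℕ → V) :
    ∑ j ∈ range (a + b + 1), zmulCoeff a b j •
        ∑ i ∈ range (a + b - j + c + 1), zmulCoeff (a + b - j) c i • g (j + i)
      = ∑ l ∈ range (a + b + c + 1), tripleCoeff a b c l • g l := by
  rw [← sum_range_zmulCoeff_smul_of_le b (Nat.le_add_right a b),
    sum_congr rfl fun j hj => by
      rw [show a + b - j + c + 1 = a + b + c + 1 - j by rw [mem_range] at hj; omega],
    sum_range_zmulCoeff_smul_of_le b (show a ≤ a + b + c by omega)]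
  simp only [smul_sum, smul_smul]
  rw [← sum_range_diag_flip]
  refine sum_congr rfl fun l _ => ?_
  rw [tripleCoeff, sum_smul]
  refine sum_congr rfl fun j hj => ?_
  rw [Nat.add_sub_cancel' (by simpa [Nat.lt_succ_iff] using hj)]

lemma sum_tripleCoeff_mul_choose (a b c x : ℕ) :
    ∑ l ∈ range (a + b + c + 1), tripleCoeff a b c l * x.choose (a + b + c - l)
      = x.choose a * x.choose b * x.choose c := by
  simp only [← smul_eq_mul (a := tripleCoeff a b c _)]
  rw [← sum_zmulCoeff_smul_sum_zmulCoeff_smul, choose_mul_choose_eq_sum_zmulCoeff, sum_mul]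
  refine sum_congr rfl fun j hj => ?_
  rw [mul_assoc, choose_mul_choose_eq_sum_zmulCoeff, mul_sum, smul_sum]
  refine sum_congr rfl fun i hi => ?_
  rw [smul_eq_mul, smul_eq_mul]
  congr 3
  rw [mem_range] at hj hi
  omega

lemma tripleCoeff_rotate {m n p l : ℕ} (hl : l ≤ m + n + p) :
    tripleCoeff m n p l = tripleCoeff n p m l := by
  have reflected (a b c x : ℕ) :
      ∑ k ∈ range (a + b + c + 1), tripleCoeff a b c (a + b + c - k) * x.choose k
        = x.choose a * x.choose b * x.choose c := by
    rw [← sum_tripleCoeff_mul_choose, ← sum_range_reflect]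
    refine sum_congr rfl fun k hk => ?_
    rw [Nat.add_sub_cancel, Nat.sub_sub_self (by simpa [Nat.lt_succ_iff] using hk)]
  have key : ∀ k ≤ m + n + p,
      tripleCoeff m n p (m + n + p - k) = tripleCoeff n p m (m + n + p - k) :=
    eq_of_forall_sum_mul_choose_eq fun x => by
      rw [reflected, show m + n + p = n + p + m by ring, reflected]
      ring
  simpa only [Nat.sub_sub_self hl] using key (m + n + p - l) (by omega)

lemma zmulCoeff_succ_succ_zero (m n : ℕ) :
    zmulCoeff (m + 1) (n + 1) 0 = zmulCoeff (m + 1) n 0 + zmulCoeff m (n + 1) 0 := by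
  simp only [zmulCoeff, Nat.sub_zero, Nat.choose_zero_right, mul_one]
  rw [show m + 1 + (n + 1) = m + n + 1 + 1 by ring, Nat.choose_succ_succ',
    Nat.add_right_comm m 1 n, ← Nat.add_assoc]

lemma zmulCoeff_succ_succ_succ (m n j : ℕ) :
    zmulCoeff (m + 1) (n + 1) (j + 1)
      = zmulCoeff (m + 1) n (j + 1) + zmulCoeff m (n + 1) (j + 1) + zmulCoeff m n j := by
  rcases lt_or_ge m j with hj | hj
  · simp only [zmulCoeff_eq_zero_of_lt _ (show m < j by omega),
      zmulCoeff_eq_zero_of_lt _ (show m + 1 < j + 1 by omega),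
      zmulCoeff_eq_zero_of_lt _ (show m < j + 1 by omega)]
  rw [zmulCoeff, zmulCoeff, zmulCoeff, zmulCoeff,
    show m + 1 + (n + 1) - (j + 1) = m + n - j + 1 by omega,
    show m + 1 + n - (j + 1) = m + n - j by omega, show m + (n + 1) - (j + 1) = m + n - j by omega,
    Nat.choose_succ_succ' (m + n - j) n, Nat.choose_succ_succ' n j]
  ring

section

variable {K : Type*} [CommRing K] (lam : K)

/-- `z_m z_n`, with the sum running up to `m + n` so that it is symmetric in `m` and `n`. -/
noncomputable def zmulBasis (m n : ℕ) : ℕ →₀ K :=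
  ∑ j ∈ range (m + n + 1), zmulCoeff m n j • Finsupp.single (m + n - j) (lam ^ j)

noncomputable def zmulBilin : (ℕ →₀ K) →ₗ[K] (ℕ →₀ K) →ₗ[K] ℕ →₀ K :=
  Finsupp.linearCombination K fun m => Finsupp.linearCombination K (zmulBasis lam m)

lemma zmulBilin_single_single (m n : ℕ) :
    zmulBilin lam (Finsupp.single m 1) (Finsupp.single n 1) = zmulBasis lam m n := by
  simp [zmulBilin]

lemma zmul_single_single (m n : ℕ) :
    zmul lam (Finsupp.single m (1 : K)) (Finsupp.single n 1)
      = ∑ j ∈ range (m + 1), zmulCoeff m n j • Finsupp.single (m + n - j) (lam ^ j) := by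
  rw [zmul, Finsupp.sum_single_index (by simp), Finsupp.sum_single_index (by simp)]
  simp only [one_mul, zmulCoeff]

lemma zmul_eq_zmulBilin (u v : ℕ →₀ K) : zmul lam u v = zmulBilin lam u v := by
  simp only [zmulBilin, Finsupp.linearCombination_apply, LinearMap.finsupp_sum_apply, zmul]
  refine Finsupp.sum_congr fun m _ => ?_
  simp only [LinearMap.smul_apply, Finsupp.linearCombination_apply, Finsupp.smul_sum]
  refine Finsupp.sum_congr fun n _ => ?_
  rw [zmulBasis, ← sum_range_zmulCoeff_smul_of_le n (Nat.le_add_right m n), smul_sum, smul_sum]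
  refine sum_congr rfl fun j _ => ?_
  simp only [smul_comm (v n), smul_comm (u m), Finsupp.smul_single, smul_eq_mul, mul_assoc,
    zmulCoeff]

lemma zmulBasis_comm (m n : ℕ) : zmulBasis lam m n = zmulBasis lam n m := by
  simp only [zmulBasis, zmulCoeff_comm m n, Nat.add_comm m n]

lemma zmulBasis_zero_left (n : ℕ) : zmulBasis lam 0 n = Finsupp.single n 1 := by
  rw [zmulBasis, ← sum_range_zmulCoeff_smul_of_le n (Nat.zero_le _), sum_range_one, zmulCoeff]
  simp only [zero_add, Nat.sub_zero, Nat.choose_self, Nat.choose_zero_right, mul_one, one_smul,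
    pow_zero]

lemma zmulBilin_comm (u v : ℕ →₀ K) : zmulBilin lam u v = zmulBilin lam v u := by
  have : (zmulBilin lam).flip = zmulBilin lam := by
    ext m n : 4
    simp [zmulBilin_single_single, zmulBasis_comm]
  exact congr($this v u)

lemma zmulBilin_one_left : zmulBilin lam (Finsupp.single 0 1) = LinearMap.id := by
  ext n : 2
  simp [zmulBilin_single_single, zmulBasis_zero_left]

lemma zmulBilin_zmulBasis_single (a b c : ℕ) :
    zmulBilin lam (zmulBasis lam a b) (Finsupp.single c 1)
      = ∑ l ∈ range (a + b + c + 1),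
          tripleCoeff a b c l • Finsupp.single (a + b + c - l) (lam ^ l) := by
  rw [← sum_zmulCoeff_smul_sum_zmulCoeff_smul, zmulBasis]
  simp only [map_sum, map_nsmul, LinearMap.sum_apply, LinearMap.smul_apply]
  refine sum_congr rfl fun j hj => ?_
  rw [← Finsupp.smul_single_one (a + b - j), map_smul, LinearMap.smul_apply,
    zmulBilin_single_single, zmulBasis, smul_sum]
  congr 1
  refine sum_congr rfl fun i hi => ?_
  rw [smul_comm, Finsupp.smul_single, smul_eq_mul, ← pow_add,
    show a + b - j + c - i = a + b + c - (j + i) by rw [mem_range] at hj hi; omega]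

lemma zmulBasis_assoc (m n p : ℕ) :
    zmulBilin lam (zmulBasis lam m n) (Finsupp.single p 1)
      = zmulBilin lam (Finsupp.single m 1) (zmulBasis lam n p) := by
  rw [zmulBilin_comm lam (Finsupp.single m 1), zmulBilin_zmulBasis_single,
    zmulBilin_zmulBasis_single, show n + p + m = m + n + p by ring]
  refine sum_congr rfl fun l hl => ?_
  rw [tripleCoeff_rotate (by simpa [Nat.lt_succ_iff] using hl)]

lemma zmulBilin_assoc (u v w : ℕ →₀ K) :
    zmulBilin lam (zmulBilin lam u v) w = zmulBilin lam u (zmulBilin lam v w) := by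
  have : (zmulBilin lam).compr₂ (zmulBilin lam)
      = (LinearMap.llcomp K _ _ _ ∘ₗ zmulBilin lam).compl₂ (zmulBilin lam) := by
    ext m n p : 6
    simp [zmulBilin_single_single, zmulBasis_assoc]
  exact congr($this u v w)

lemma zmulBasis_apply (a b d : ℕ) :
    zmulBasis lam a b d
      = if d ≤ a + b then zmulCoeff a b (a + b - d) • lam ^ (a + b - d) else 0 := by
  rw [zmulBasis, Finsupp.finsetSum_apply]
  simp only [Finsupp.smul_apply, Finsupp.single_apply]
  split_ifs with hd
  · refine (sum_eq_single (a + b - d) (fun j hj hne => ?_) (fun h => absurd (by simp) h)).trans ?_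
    · rw [mem_range] at hj
      rw [if_neg (by omega), smul_zero]
    · rw [if_pos (by omega)]
  · exact sum_eq_zero fun j hj => by rw [if_neg (by omega), smul_zero]

lemma shiftP_apply_zero (u : ℕ →₀ K) : shiftP u 0 = 0 :=
  Finsupp.mapDomain_of_notMem_range _ _ (by simp)

lemma shiftP_apply_succ (u : ℕ →₀ K) (d : ℕ) : shiftP u (d + 1) = u d :=
  Finsupp.mapDomain_apply (add_left_injective 1) u d

lemma zmulBasis_succ_succ (m n : ℕ) :
    zmulBasis lam (m + 1) (n + 1)
      = shiftP (zmulBasis lam (m + 1) n) + shiftP (zmulBasis lam m (n + 1))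
        + lam • shiftP (zmulBasis lam m n) := by
  ext d
  simp only [Finsupp.add_apply, Finsupp.smul_apply, zmulBasis_apply]
  rcases d with _ | e
  · simp [shiftP_apply_zero, zmulCoeff_eq_zero_of_lt]
  simp only [shiftP_apply_succ, zmulBasis_apply]
  rcases lt_trichotomy e (m + n + 1) with he | rfl | he
  · rw [if_pos (by omega), if_pos (by omega), if_pos (by omega), if_pos (by omega),
      show m + 1 + (n + 1) - (e + 1) = m + n - e + 1 by omega,
      show m + 1 + n - e = m + n - e + 1 by omega, show m + (n + 1) - e = m + n - e + 1 by omega,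
      zmulCoeff_succ_succ_succ]
    simp only [nsmul_eq_mul, smul_eq_mul]
    push_cast
    ring
  · rw [if_pos (by omega), if_pos (by omega), if_pos (by omega), if_neg (by omega),
      show m + 1 + (n + 1) - (m + n + 1 + 1) = 0 by omega,
      show m + 1 + n - (m + n + 1) = 0 by omega,
      show m + (n + 1) - (m + n + 1) = 0 by omega, zmulCoeff_succ_succ_zero, add_smul]
    simp
  · rw [if_neg (by omega), if_neg (by omega), if_neg (by omega), if_neg (by omega)]
    simp

lemma shiftP_eq_lmapDomain (u : ℕ →₀ K) : shiftP u = Finsupp.lmapDomain K K (· + 1) u := rfl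

lemma zmulBilin_shiftP_shiftP (u v : ℕ →₀ K) :
    zmulBilin lam (shiftP u) (shiftP v)
      = shiftP (zmulBilin lam (shiftP u) v) + shiftP (zmulBilin lam u (shiftP v))
        + lam • shiftP (zmulBilin lam u v) := by
  let S : (ℕ →₀ K) →ₗ[K] ℕ →₀ K := Finsupp.lmapDomain K K (· + 1)
  let B := zmulBilin lam
  have : (B ∘ₗ S).compl₂ S
      = ((B ∘ₗ S).compr₂ S + (B.compl₂ S).compr₂ S) + lam • B.compr₂ S := by
    ext m n : 4
    simp [S, B, zmulBilin_single_single, zmulBasis_succ_succ, shiftP_eq_lmapDomain]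
  simpa [S, B, shiftP_eq_lmapDomain] using congr($this u v)

end

/-- A = ⊕ K z_i with the above product is a commutative K-algebra with identity z_0,
and P(z_i) = z_{i+1} is a Rota-Baxter operator of weight λ on A. -/
theorem stmt4 {K : Type*} [CommRing K] (lam : K) :
    (∀ m n : ℕ, zmul lam (Finsupp.single m (1 : K)) (Finsupp.single n (1 : K))
      = ∑ j ∈ range (m + 1),
          ((m + n - j).choose n * n.choose j) • Finsupp.single (m + n - j) (lam ^ j)) ∧
    (∀ u v : ℕ →₀ K, zmul lam u v = zmul lam v u) ∧
    (∀ u v w : ℕ →₀ K, zmul lam (zmul lam u v) w = zmul lam u (zmul lam v w)) ∧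
    (∀ u v w : ℕ →₀ K, zmul lam u (v + w) = zmul lam u v + zmul lam u w) ∧
    (∀ u v w : ℕ →₀ K, zmul lam (u + v) w = zmul lam u w + zmul lam v w) ∧
    (∀ (c : K) (u v : ℕ →₀ K), zmul lam (c • u) v = c • zmul lam u v) ∧
    (∀ (c : K) (u v : ℕ →₀ K), zmul lam u (c • v) = c • zmul lam u v) ∧
    (∀ u : ℕ →₀ K, zmul lam (Finsupp.single 0 (1 : K)) u = u) ∧
    (∀ u : ℕ →₀ K, zmul lam u (Finsupp.single 0 (1 : K)) = u) ∧
    (∀ u v : ℕ →₀ K,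
      zmul lam (shiftP u) (shiftP v)
        = shiftP (zmul lam (shiftP u) v) + shiftP (zmul lam u (shiftP v))
          + lam • shiftP (zmul lam u v)) := by
  refine ⟨zmul_single_single lam, ?_⟩
  simp only [zmul_eq_zmulBilin]
  exact ⟨zmulBilin_comm lam, zmulBilin_assoc lam, fun u v w => map_add _ v w,
    fun u v w => by rw [map_add, LinearMap.add_apply],
    fun c u v => by rw [map_smul, LinearMap.smul_apply], fun c u v => map_smul _ c v,
    fun u => by rw [zmulBilin_one_left, LinearMap.id_apply],
    fun u => by rw [zmulBilin_comm, zmulBilin_one_left, LinearMap.id_apply],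
    zmulBilin_shiftP_shiftP lam⟩
end

section
/- Let Q be a k-linear operator on a commutative k-algebra R, and let φ, ψ ∈ k[x]. Then there is a unique k-linear operator Q̃ on R^ℕ such that Q̃(f)_0 = Q(f_0) for all f ∈ R^ℕ and ∂Q̃ = φ(∂) + Q̃ψ(∂), where ∂ is the shift operator ∂(f)_n = f_{n+1}. Explicitly, Q̃ is determined by the recursion Q̃(f)_{n+1} = (φ(∂)f)_n + Q̃(ψ(∂)f)_n. -/
open Finset

/-- For p ∈ K[x], the operator p(∂) on sequences, where ∂ is the shift:
(p(∂)f)_n = Σ_i p_i f_{n+i}. -/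
noncomputable def polyShift {K R : Type*} [CommRing K] [CommRing R] [Algebra K R]
    (p : Polynomial K) (f : ℕ → R) : ℕ → R :=
  fun n => ∑ i ∈ range (p.natDegree + 1), p.coeff i • f (n + i)

/-! Since `Q̃(f)_{n+1}` only involves `Q̃` at index `n`, the recursion defines the coordinate
functionals `f ↦ Q̃(f)_n` one index at a time, each as a composite of linear maps; this gives
existence together with linearity, and uniqueness is an induction on `n`. -/

section ShiftLift

variable {K R : Type*} [CommRing K] [CommRing R] [Algebra K R]

noncomputable def polyShiftₗ (p : Polynomial K) : (ℕ → R) →ₗ[K] (ℕ → R) where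
  toFun := polyShift p
  map_add' f g := by
    funext n
    simp only [polyShift, Pi.add_apply, smul_add, sum_add_distrib]
  map_smul' c f := by
    funext n
    simp only [polyShift, Pi.smul_apply, smul_sum, smul_comm c, RingHom.id_apply]

noncomputable def shiftLiftCoord (Q : R →ₗ[K] R) (φ ψ : Polynomial K) :
    ℕ → (ℕ → R) →ₗ[K] R
  | 0 => Q ∘ₗ LinearMap.proj 0
  | n + 1 => LinearMap.proj n ∘ₗ polyShiftₗ φ + shiftLiftCoord Q φ ψ n ∘ₗ polyShiftₗ ψ

noncomputable def shiftLift (Q : R →ₗ[K] R) (φ ψ : Polynomial K) :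
    (ℕ → R) →ₗ[K] (ℕ → R) :=
  LinearMap.pi (shiftLiftCoord Q φ ψ)

variable (Q : R →ₗ[K] R) (φ ψ : Polynomial K)

theorem shiftLift_apply_zero (f : ℕ → R) : shiftLift Q φ ψ f 0 = Q (f 0) := rfl

theorem shiftLift_apply_succ (f : ℕ → R) (n : ℕ) :
    shiftLift Q φ ψ f (n + 1) = polyShift φ f n + shiftLift Q φ ψ (polyShift ψ f) n := rfl

theorem eq_shiftLift_of_recursion (T : (ℕ → R) → ℕ → R)
    (h_zero : ∀ f, T f 0 = Q (f 0))
    (h_succ : ∀ f n, T f (n + 1) = polyShift φ f n + T (polyShift ψ f) n) :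
    T = shiftLift Q φ ψ := by
  ext f n
  induction n generalizing f with
  | zero => exact h_zero f
  | succ n ih => rw [h_succ, ih, shiftLift_apply_succ]

end ShiftLift

/-- Given a K-linear operator Q on R and φ, ψ ∈ K[x], there is a unique K-linear
operator Q̃ on R^ℕ covering Q (i.e. Q̃(f)_0 = Q(f_0)) and satisfying
∂Q̃ = φ(∂) + Q̃ψ(∂), i.e. the recursion Q̃(f)_{n+1} = (φ(∂)f)_n + Q̃(ψ(∂)f)_n. -/
theorem stmt9 {K R : Type*} [CommRing K] [CommRing R] [Algebra K R]
    (Q : R →ₗ[K] R) (φ ψ : Polynomial K) :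
    ∃! Qt : (ℕ → R) →ₗ[K] (ℕ → R),
      (∀ f : ℕ → R, Qt f 0 = Q (f 0)) ∧
      (∀ (f : ℕ → R) (n : ℕ), Qt f (n + 1) = polyShift φ f n + Qt (polyShift ψ f) n) :=
  ⟨shiftLift Q φ ψ, ⟨shiftLift_apply_zero Q φ ψ, shiftLift_apply_succ Q φ ψ⟩,
    fun _ ⟨h_zero, h_succ⟩ =>
      LinearMap.coe_injective (eq_shiftLift_of_recursion Q φ ψ _ h_zero h_succ)⟩
end

section
/- Let (R, P) be a Rota-Baxter algebra of weight λ ∈ k, and define the operator P̃ on the λ-Hurwitz series algebra R^ℕ by P̃(f)_n = P(f_n) for all n ∈ ℕ (applying P componentwise). Then P̃ is a Rota-Baxter operator of weight λ on R^ℕ, and it satisfies the commutation relation ∂P̃ = P̃∂ with the shift operator ∂. -/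
open Finset

/-- The componentwise application of P to a sequence. -/
def compwise {R : Type*} (P : R → R) (f : ℕ → R) : ℕ → R := fun n => P (f n)

/-! In each degree the λ-Hurwitz product is a `K`-linear combination of products `f a * g b`,
and `P` is `K`-linear, so the Rota–Baxter identity for `compwise P` follows term by term from
the one for `P`. -/

theorem der_compwise {R : Type*} (P : R → R) (f : ℕ → R) :
    der (compwise P f) = compwise P (der f) :=
  rfl

theorem compwise_hmul_apply {K R : Type*} [CommRing K] [CommRing R] [Algebra K R] (lam : K)
    (P : R →ₗ[K] R) (f g : ℕ → R) (n : ℕ) :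
    compwise P (hmul lam f g) n = ∑ i ∈ range (n + 1), ∑ j ∈ range (n - i + 1),
      (n.choose i * (n - i).choose j) • (lam ^ i • P (f (n - j) * g (i + j))) := by
  simp only [compwise, hmul, map_sum, map_nsmul, map_smul]

theorem hmul_compwise_compwise {K R : Type*} [CommRing K] [CommRing R] [Algebra K R] (lam : K)
    (P : R →ₗ[K] R)
    (hP : ∀ x y : R, P x * P y = P (P x * y) + P (x * P y) + lam • P (x * y)) (f g : ℕ → R) :
    hmul lam (compwise P f) (compwise P g)
      = compwise P (hmul lam (compwise P f) g) + compwise P (hmul lam f (compwise P g))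
        + lam • compwise P (hmul lam f g) := by
  funext n
  simp only [Pi.add_apply, Pi.smul_apply, compwise_hmul_apply, smul_sum, ← sum_add_distrib]
  refine sum_congr rfl fun i _ => sum_congr rfl fun j _ => ?_
  simp only [compwise, hP, smul_add, smul_comm lam]

/-- If (R,P) is a Rota-Baxter algebra of weight λ, then the componentwise operator
P̃(f)_n = P(f_n) is a Rota-Baxter operator of weight λ on the λ-Hurwitz series
algebra, and ∂P̃ = P̃∂. -/
theorem stmt10 {K R : Type*} [CommRing K] [CommRing R] [Algebra K R] (lam : K)
    (P : R →ₗ[K] R)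
    (hP : ∀ x y : R, P x * P y = P (P x * y) + P (x * P y) + lam • P (x * y)) :
    (∀ f g : ℕ → R,
      hmul lam (compwise P f) (compwise P g)
        = compwise P (hmul lam (compwise P f) g) + compwise P (hmul lam f (compwise P g))
          + lam • compwise P (hmul lam f g)) ∧
    (∀ f : ℕ → R, der (compwise P f) = compwise P (der f)) :=
  ⟨hmul_compwise_compwise lam P hP, der_compwise P⟩
end

section
/- Let (R, P) be a Rota-Baxter algebra of weight 0 and a_0 ∈ k. Define P̃ : R^ℕ → R^ℕ by P̃(f) = (P(f_0), a_0 f_0, a_0 f_1, a_0 f_2, ...). Then P̃ is a Rota-Baxter operator of weight 0 on the weight-0 Hurwitz series algebra R^ℕ, i.e., P̃(f)P̃(g) = P̃(P̃(f)g) + P̃(fP̃(g)) for all f, g ∈ R^ℕ. -/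
/-!
Writing `D f := (f 1, f 2, …)`, the Hurwitz product satisfies the Leibniz rule
`D (f g) = (D f) g + f (D g)`, and `D (P̃ f) = a₀ f`. Hence both sides of the Rota-Baxter
identity have the same image under `D`, while in degree `0` the identity is that of `P`.
-/

open Finset

/-- The weight-0 Hurwitz product on sequences. -/
def hmul0 {K R : Type*} [CommRing K] [CommRing R] [Algebra K R] (f g : ℕ → R) : ℕ → R :=
  fun n => ∑ j ∈ range (n + 1), n.choose j • (f (n - j) * g j)

/-- The cover P̃(f) = (P(f_0), a_0 f_0, a_0 f_1, a_0 f_2, ...). -/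
def cov {K R : Type*} [CommRing K] [CommRing R] [Algebra K R]
    (P : R → R) (a0 : K) (f : ℕ → R) : ℕ → R :=
  fun n => if n = 0 then P (f 0) else a0 • f (n - 1)

section Hurwitz

variable {K R : Type*} [CommRing K] [CommRing R] [Algebra K R]

theorem hmul0_apply_zero (f g : ℕ → R) : hmul0 (K := K) f g 0 = f 0 * g 0 := by
  simp [hmul0]

theorem hmul0_apply_succ (f g : ℕ → R) (n : ℕ) :
    hmul0 (K := K) f g (n + 1) =
      hmul0 (K := K) (fun k => f (k + 1)) g n + hmul0 (K := K) f (fun k => g (k + 1)) n := by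
  rw [hmul0, sum_choose_succ_nsmul (fun j k => f k * g j) n]
  congr 1
  refine sum_congr rfl fun j hj => ?_
  rw [Nat.sub_add_comm (Nat.lt_succ_iff.mp (mem_range.mp hj))]

theorem hmul0_smul_left (a : K) (f g : ℕ → R) :
    hmul0 (K := K) (a • f) g = a • hmul0 (K := K) f g := by
  funext n
  simp only [hmul0, Pi.smul_apply, smul_mul_assoc, smul_sum, smul_comm a]

theorem hmul0_smul_right (a : K) (f g : ℕ → R) :
    hmul0 (K := K) f (a • g) = a • hmul0 (K := K) f g := by
  funext n
  simp only [hmul0, Pi.smul_apply, mul_smul_comm, smul_sum, smul_comm a]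

theorem cov_apply_zero (P : R → R) (a0 : K) (f : ℕ → R) : cov P a0 f 0 = P (f 0) := rfl

theorem cov_apply_succ (P : R → R) (a0 : K) (f : ℕ → R) (n : ℕ) :
    cov P a0 f (n + 1) = a0 • f n := rfl

theorem cov_shift (P : R → R) (a0 : K) (f : ℕ → R) :
    (fun n => cov P a0 f (n + 1)) = a0 • f := rfl

end Hurwitz

/-- If (R,P) is a Rota-Baxter algebra of weight 0 and a_0 ∈ K, then
P̃(f) = (P(f_0), a_0 f_0, a_0 f_1, ...) is a Rota-Baxter operator of weight 0 on
the weight-0 Hurwitz series algebra R^ℕ. -/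
theorem stmt11 {K R : Type*} [CommRing K] [CommRing R] [Algebra K R]
    (P : R →ₗ[K] R) (a0 : K)
    (hP : ∀ x y : R, P x * P y = P (P x * y) + P (x * P y)) :
    ∀ f g : ℕ → R,
      hmul0 (K := K) (cov (K := K) P a0 f) (cov (K := K) P a0 g)
        = cov (K := K) P a0 (hmul0 (K := K) (cov (K := K) P a0 f) g)
          + cov (K := K) P a0 (hmul0 (K := K) f (cov (K := K) P a0 g)) := by
  intro f g
  funext n
  cases n with
  | zero =>
    simp only [Pi.add_apply, cov_apply_zero, hmul0_apply_zero]
    exact hP _ _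
  | succ m =>
    rw [hmul0_apply_succ, cov_shift, cov_shift, hmul0_smul_left, hmul0_smul_right,
      Pi.add_apply, cov_apply_succ, cov_apply_succ]
    exact add_comm _ _
end

section
/- Let k be an integral domain of characteristic 0, λ ∈ k nonzero, a_0 ∈ k, and consider the Rota-Baxter algebra (R, P) where R = A/I_1 for A = ⊕ k z_i with product z_m z_n = Σ_{j=0}^{m} C(m+n-j,n)C(n,j)λ^j z_{m+n-j} and P induced by z_i ↦ z_{i+1} (so P = 0 on R ≅ k). Define P̃ on R^ℕ by P̃(f) = (P(f_0), a_0 f_0, a_0 f_1, ...). If P̃ is a Rota-Baxter operator of weight λ on the λ-Hurwitz series algebra R^ℕ, then a_0 = 0 or a_0 = 1. -/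
/-!
At index `1` the Rota-Baxter identity for the constant sequences `f = g = 1` reads
`λ a₀² = λ a₀`: the left side only sees the term `λ P̃(1)₁ P̃(1)₁`, while on the right only the
weight term survives, because `P̃` vanishes at index `0`. Cancelling `λ` in the domain `K`
leaves `a₀² = a₀`.
-/

open Finset

/-- The cover P̃(f) = (P(f_0), a_0 f_0, a_0 f_1, ...) for R = A/I₁ ≅ K with the
zero Rota-Baxter operator P = 0. -/
def cov13 {K : Type*} [CommRing K] (a0 : K) (f : ℕ → K) : ℕ → K :=
  fun n => if n = 0 then 0 else a0 * f (n - 1)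

section Hurwitz

variable {K R : Type*} [CommRing K] [CommRing R] [Algebra K R]

theorem hmul_apply_zero (lam : K) (f g : ℕ → R) : hmul lam f g 0 = f 0 * g 0 := by
  simp [hmul]

theorem hmul_apply_one (lam : K) (f g : ℕ → R) :
    hmul lam f g 1 = f 1 * g 0 + f 0 * g 1 + lam • (f 1 * g 1) := by
  simp [hmul, sum_range_succ]

end Hurwitz

section Cover

variable {K : Type*} [CommRing K]

@[simp]
theorem cov13_apply_zero (a0 : K) (f : ℕ → K) : cov13 a0 f 0 = 0 := by
  simp [cov13]

@[simp]
theorem cov13_apply_succ (a0 : K) (f : ℕ → K) (n : ℕ) : cov13 a0 f (n + 1) = a0 * f n := by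
  simp [cov13]

theorem mul_sq_eq_of_cov13_rotaBaxter (lam a0 : K)
    (hRB : hmul lam (cov13 a0 1) (cov13 a0 1)
        = cov13 a0 (hmul lam (cov13 a0 1) 1) + cov13 a0 (hmul lam 1 (cov13 a0 1))
          + lam • cov13 a0 (hmul lam 1 1)) :
    lam * a0 ^ 2 = lam * a0 := by
  have h := congrFun hRB 1
  simp only [hmul_apply_one, Pi.add_apply, Pi.smul_apply, cov13_apply_succ, hmul_apply_zero,
    cov13_apply_zero, Pi.one_apply, smul_eq_mul] at h
  simpa [cov13, sq, mul_comm, mul_left_comm] using h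

end Cover

theorem stmt13_general {K : Type*} [CommRing K] [IsDomain K]
    (lam : K) (hlam : lam ≠ 0) (a0 : K)
    (hRB : ∀ f g : ℕ → K,
      hmul lam (cov13 a0 f) (cov13 a0 g)
        = cov13 a0 (hmul lam (cov13 a0 f) g) + cov13 a0 (hmul lam f (cov13 a0 g))
          + lam • cov13 a0 (hmul lam f g)) :
    a0 = 0 ∨ a0 = 1 := by
  have hidem : a0 * a0 = a0 * 1 := by
    simpa [sq] using mul_left_cancel₀ hlam (mul_sq_eq_of_cov13_rotaBaxter lam a0 (hRB 1 1))
  rcases eq_or_ne a0 0 with h0 | h0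
  · exact Or.inl h0
  · exact Or.inr (mul_left_cancel₀ h0 hidem)

/-- Over a domain K of characteristic 0 with λ ≠ 0, if the cover
P̃(f) = (0, a_0 f_0, a_0 f_1, ...) of the zero Rota-Baxter operator on R ≅ K is a
Rota-Baxter operator of weight λ on the λ-Hurwitz series algebra, then a_0 = 0 or a_0 = 1. -/
theorem stmt13 {K : Type*} [CommRing K] [IsDomain K] [CharZero K]
    (lam : K) (hlam : lam ≠ 0) (a0 : K)
    (hRB : ∀ f g : ℕ → K,
      hmul lam (cov13 a0 f) (cov13 a0 g)
        = cov13 a0 (hmul lam (cov13 a0 f) g) + cov13 a0 (hmul lam f (cov13 a0 g))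
          + lam • cov13 a0 (hmul lam f g)) :
    a0 = 0 ∨ a0 = 1 :=
  stmt13_general lam hlam a0 hRB
end
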